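/- There exists a constant β > 0, depending only on n, |S|, |A|, r_max, and τ, such that for every player i, every state s, every joint action a, and all policy profiles π, π' ∈ Π, |adv^π_i(s,a) − adv^{π'}_i(s,a)| ≤ β ‖π − π'‖_∞; that is, the advantage functions are Lipschitz continuous in the policy profile. -/

import Mathlib

/-!
Uniform mixing says that every `P_π` contracts the ℓ¹ distance of distributions, hence the ℓ¹ norm
of zero-sum vectors, by `γ = exp (-1/τ) < 1`. The matrices `P_π` and the reward vectors `R_i^π`
move by `K = |A| n ‖π - π'‖_∞` when `π` does; writing `p - p' = p (P_π - P_π') + (p - p') P_π'`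
gives `‖p - p'‖₁ ≤ K / (1 - γ)`, and the telescoping
`u (P^{t+1} - P'^{t+1}) = u P^{t+1} (P - P') + u (P^{t+1} - P'^{t+1}) P'` gives
`‖u (P^{t+1} - P'^{t+1})‖₁ ≤ (t + 1) γ^t K ‖u‖₁` for zero-sum `u`. So the `t`-th terms of the two
advantage series differ by `O(K (t + 1) γ^t)`, which sums to `O(K / (1 - γ)²)`.
-/

open Matrix BigOperators

noncomputable section

variable {n : ℕ} {S : Type} [Fintype S] [DecidableEq S]
  {A : Fin n → Type} [∀ i, Fintype (A i)] [∀ i, DecidableEq (A i)]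

/-- A stationary policy profile: each player `i` assigns to each state a
probability distribution on her action set `A i`. -/
def IsPolicyProfile (π : ∀ i : Fin n, S → A i → ℝ) : Prop :=
  (∀ i s a, 0 ≤ π i s a) ∧ (∀ i s, ∑ a, π i s a = 1)

/-- Transition probabilities `ℙ[s' | s, a]`. -/
def IsTransition (T : S → (∀ i, A i) → S → ℝ) : Prop :=
  (∀ s a s', 0 ≤ T s a s') ∧ (∀ s a, ∑ s', T s a s' = 1)

/-- A probability distribution on `S` (as a row vector). -/
def IsDist (w : S → ℝ) : Prop := (∀ s, 0 ≤ w s) ∧ ∑ s, w s = 1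

/-- The transition matrix induced by a policy profile:
`P_π(s'|s) = ∑_a ℙ[s'|s,a] ∏_j π_j(a_j|s)`. -/
def Pmat (T : S → (∀ i, A i) → S → ℝ) (π : ∀ i : Fin n, S → A i → ℝ) :
    Matrix S S ℝ :=
  fun s s' => ∑ a : ∀ i, A i, T s a s' * ∏ i, π i s (a i)

/-- Sup-norm distance between two policy profiles. -/
def polDist (π π' : ∀ i : Fin n, S → A i → ℝ) : ℝ :=
  ⨆ i, ⨆ s, ⨆ a, |π i s a - π' i s a|

/-- ℓ¹-norm on ℝ^S. -/
def l1 (w : S → ℝ) : ℝ := ∑ s, |w s|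

/-- The expected one-step reward vector `R_i^π`. -/
def Rvec (r : S → (∀ i, A i) → ℝ) (π : ∀ i : Fin n, S → A i → ℝ) : S → ℝ :=
  fun s => ∑ a : ∀ i, A i, (∏ j, π j s (a j)) * r s a

/-- The long-run average value `V_i(π) = ∑_s p_π(s) R_i^π(s)`, where `p` is the
stationary distribution of `P_π`. -/
def Vval (p : S → ℝ) (R : S → ℝ) : ℝ := ∑ s, p s * R s

/-- The uniform mixing assumption with mixing time `τ`. -/
def Mixing (T : S → (∀ i, A i) → S → ℝ) (τ : ℝ) : Prop :=
  ∀ π : ∀ i : Fin n, S → A i → ℝ, IsPolicyProfile π →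
    ∀ w w' : S → ℝ, IsDist w → IsDist w' →
      l1 ((w - w') ᵥ* Pmat T π) ≤ Real.exp (-(1 / τ)) * l1 (w - w')

/-- The advantage function
`adv^π_i(s,a) = r_i(s,a) − V_i(π) + ∑_{t≥1} ((e_s − p_π) P_π^t) R_i^π`. -/
def adv (T : S → (∀ i, A i) → S → ℝ) (r : S → (∀ i, A i) → ℝ)
    (π : ∀ i : Fin n, S → A i → ℝ) (p : S → ℝ) (s : S) (a : ∀ i, A i) : ℝ :=
  r s a - Vval p (Rvec r π)
    + ∑' t : ℕ, ((Pi.single s 1 - p) ᵥ* (Pmat T π ^ (t + 1))) ⬝ᵥ (Rvec r π)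

/-- The average advantage function
`\bar adv^π_i(s, a_i) = ∑_{a_{-i}} (∏_{j≠i} π_j(a_j|s)) adv^π_i(s,(a_i,a_{-i}))`. -/
def avgAdv (T : S → (∀ i, A i) → S → ℝ) (r : S → (∀ i, A i) → ℝ)
    (π : ∀ i : Fin n, S → A i → ℝ) (p : S → ℝ) (i : Fin n) (s : S) (ai : A i) : ℝ :=
  ∑ a : ∀ j, A j,
    if a i = ai then (∏ j ∈ Finset.univ.erase i, π j s (a j)) * adv T r π p s a
    else 0

section L1

variable {S : Type} [Fintype S]

lemma l1_nonneg (v : S → ℝ) : 0 ≤ l1 v :=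
  Finset.sum_nonneg fun s _ => abs_nonneg (v s)

lemma l1_smul (c : ℝ) (v : S → ℝ) : l1 (c • v) = |c| * l1 v := by
  simp [l1, abs_mul, Finset.mul_sum]

lemma l1_add_le (v w : S → ℝ) : l1 (v + w) ≤ l1 v + l1 w :=
  (Finset.sum_le_sum fun s _ => abs_add_le (v s) (w s)).trans_eq Finset.sum_add_distrib

lemma l1_sub_le (v w : S → ℝ) : l1 (v - w) ≤ l1 v + l1 w :=
  (Finset.sum_le_sum fun s _ => abs_sub (v s) (w s)).trans_eq Finset.sum_add_distrib

lemma l1_eq_zero_iff {v : S → ℝ} : l1 v = 0 ↔ v = 0 := by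
  simp [l1, Finset.sum_eq_zero_iff_of_nonneg, funext_iff]

lemma abs_dotProduct_le {v R : S → ℝ} {ρ : ℝ} (hR : ∀ s, |R s| ≤ ρ) :
    |v ⬝ᵥ R| ≤ l1 v * ρ := by
  calc |v ⬝ᵥ R| ≤ ∑ s, |v s| * |R s| := by
        exact (Finset.abs_sum_le_sum_abs (fun s => v s * R s) _).trans_eq (by simp only [abs_mul])
    _ ≤ ∑ s, |v s| * ρ := by gcongr with s; exact hR s
    _ = l1 v * ρ := (Finset.sum_mul _ _ _).symm

lemma l1_vecMul_le_of_sum_abs_le {v : S → ℝ} {M : Matrix S S ℝ} {B : ℝ}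
    (hB : ∀ s, ∑ s', |M s s'| ≤ B) :
    l1 (v ᵥ* M) ≤ l1 v * B := by
  calc l1 (v ᵥ* M) ≤ ∑ s', ∑ s, |v s| * |M s s'| := by
        refine Finset.sum_le_sum fun s' _ => ?_
        exact (Finset.abs_sum_le_sum_abs (fun s => v s * M s s') _).trans_eq
          (by simp only [abs_mul])
    _ = ∑ s, |v s| * ∑ s', |M s s'| := by rw [Finset.sum_comm]; simp only [Finset.mul_sum]
    _ ≤ ∑ s, |v s| * B := by gcongr with s; exact hB s
    _ = l1 v * B := (Finset.sum_mul _ _ _).symm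

lemma IsDist.l1_eq_one {w : S → ℝ} (hw : IsDist w) : l1 w = 1 :=
  (Finset.sum_congr rfl fun s _ => abs_of_nonneg (hw.1 s)).trans hw.2

lemma IsDist.sum_sub_eq_zero {w w' : S → ℝ} (hw : IsDist w) (hw' : IsDist w') :
    ∑ s, (w - w') s = 0 := by
  simp [Finset.sum_sub_distrib, hw.2, hw'.2]

lemma IsDist.l1_sub_le_two {w w' : S → ℝ} (hw : IsDist w) (hw' : IsDist w') :
    l1 (w - w') ≤ 2 := by
  linarith [l1_sub_le w w', hw.l1_eq_one, hw'.l1_eq_one]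

lemma isDist_single [DecidableEq S] (s : S) : IsDist (Pi.single s 1 : S → ℝ) :=
  ⟨fun s' => by by_cases h : s' = s <;> simp [h], by simp⟩

lemma exists_eq_smul_sub_of_sum_eq_zero {u : S → ℝ} (hu : ∑ s, u s = 0) (hu0 : u ≠ 0) :
    ∃ c > (0 : ℝ), ∃ w w', IsDist w ∧ IsDist w' ∧ u = c • (w - w') := by
  set c := ∑ s, (u s)⁺
  have hneg : ∑ s, (u s)⁻ = c := by
    have h : ∑ s, ((u s)⁺ - (u s)⁻) = 0 := by simpa only [posPart_sub_negPart] using hu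
    rw [Finset.sum_sub_distrib, sub_eq_zero] at h
    exact h.symm
  have hl1 : l1 u = c + c := by
    simp only [l1, ← posPart_add_negPart, Finset.sum_add_distrib, hneg]
    rfl
  have hc : 0 < c := by
    refine (Finset.sum_nonneg fun s _ => posPart_nonneg (u s)).lt_of_ne fun h => hu0 ?_
    rw [← l1_eq_zero_iff, hl1, show c = 0 from h.symm, add_zero]
  refine ⟨c, hc, c⁻¹ • u⁺, c⁻¹ • u⁻, ⟨fun s => ?_, ?_⟩, ⟨fun s => ?_, ?_⟩, ?_⟩
  · exact mul_nonneg (inv_nonneg.2 hc.le) (posPart_nonneg _)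
  · simp [← Finset.mul_sum, c, hc.ne']
  · exact mul_nonneg (inv_nonneg.2 hc.le) (negPart_nonneg _)
  · simp [← Finset.mul_sum, hneg, hc.ne']
  · rw [← smul_sub, smul_smul, mul_inv_cancel₀ hc.ne', one_smul, posPart_sub_negPart]

end L1

section Contraction

variable {S : Type} [Fintype S]

/-- `Mixing T τ` says that `Pmat T π` is an `IsContraction` with factor `exp (-(1 / τ))` for every
policy profile `π`. -/
def IsContraction (M : Matrix S S ℝ) (γ : ℝ) : Prop :=
  ∀ w w' : S → ℝ, IsDist w → IsDist w' → l1 ((w - w') ᵥ* M) ≤ γ * l1 (w - w')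

lemma sum_vecMul_of_mulVec_one {M : Matrix S S ℝ} (hM : M *ᵥ 1 = 1) (u : S → ℝ) :
    ∑ s, (u ᵥ* M) s = ∑ s, u s := by
  rw [← dotProduct_one, ← dotProduct_mulVec, hM, dotProduct_one]

lemma sum_vecMul_pow_of_mulVec_one [DecidableEq S] {M : Matrix S S ℝ} (hM : M *ᵥ 1 = 1)
    (u : S → ℝ) (t : ℕ) : ∑ s, (u ᵥ* M ^ t) s = ∑ s, u s := by
  induction t with
  | zero => simp
  | succ t ih => rw [pow_succ, ← vecMul_vecMul, sum_vecMul_of_mulVec_one hM, ih]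

namespace IsContraction

variable {M M' : Matrix S S ℝ} {γ K : ℝ}

lemma l1_vecMul_le (hM : IsContraction M γ) {u : S → ℝ} (hu : ∑ s, u s = 0) :
    l1 (u ᵥ* M) ≤ γ * l1 u := by
  rcases eq_or_ne u 0 with rfl | hu0
  · simp [l1]
  obtain ⟨c, hc, w, w', hw, hw', rfl⟩ := exists_eq_smul_sub_of_sum_eq_zero hu hu0
  rw [smul_vecMul, l1_smul, l1_smul, abs_of_pos hc, mul_left_comm]
  exact mul_le_mul_of_nonneg_left (hM w w' hw hw') hc.le

lemma l1_vecMul_pow_le [DecidableEq S] (hM : IsContraction M γ) (hM1 : M *ᵥ 1 = 1)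
    (hγ : 0 ≤ γ) {u : S → ℝ} (hu : ∑ s, u s = 0) (t : ℕ) :
    l1 (u ᵥ* M ^ t) ≤ γ ^ t * l1 u := by
  induction t with
  | zero => simp
  | succ t ih =>
    rw [pow_succ, ← vecMul_vecMul, pow_succ', mul_assoc]
    calc _ ≤ γ * l1 (u ᵥ* M ^ t) :=
          hM.l1_vecMul_le (by rw [sum_vecMul_pow_of_mulVec_one hM1, hu])
      _ ≤ γ * (γ ^ t * l1 u) := mul_le_mul_of_nonneg_left ih hγ

lemma l1_sub_le_of_stationary (hM' : IsContraction M' γ) (hγ : γ < 1)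
    (hK : ∀ s, ∑ s', |M s s' - M' s s'| ≤ K) {p p' : S → ℝ} (hp : IsDist p) (hp' : IsDist p')
    (hpM : p ᵥ* M = p) (hpM' : p' ᵥ* M' = p') : l1 (p - p') ≤ K / (1 - γ) := by
  have hsplit : p - p' = p ᵥ* (M - M') + (p - p') ᵥ* M' := by
    rw [vecMul_sub, sub_vecMul, hpM, hpM']
    abel
  have h : l1 (p - p') ≤ K + γ * l1 (p - p') :=
    calc l1 (p - p') ≤ l1 (p ᵥ* (M - M')) + l1 ((p - p') ᵥ* M') :=
          (congrArg l1 hsplit).trans_le (l1_add_le _ _)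
      _ ≤ l1 p * K + γ * l1 (p - p') :=
          add_le_add (l1_vecMul_le_of_sum_abs_le hK) (hM'.l1_vecMul_le (hp.sum_sub_eq_zero hp'))
      _ = K + γ * l1 (p - p') := by rw [hp.l1_eq_one, one_mul]
  rw [le_div_iff₀ (sub_pos.2 hγ)]
  linarith

lemma l1_vecMul_pow_sub_le [DecidableEq S] (hM : IsContraction M γ)
    (hM' : IsContraction M' γ) (hM1 : M *ᵥ 1 = 1) (hM'1 : M' *ᵥ 1 = 1) (hγ : 0 ≤ γ)
    (hK0 : 0 ≤ K) (hK : ∀ s, ∑ s', |M s s' - M' s s'| ≤ K) {u : S → ℝ} (hu : ∑ s, u s = 0)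
    (t : ℕ) : l1 (u ᵥ* M ^ (t + 1) - u ᵥ* M' ^ (t + 1)) ≤ (t + 1) * γ ^ t * K * l1 u := by
  induction t with
  | zero =>
    simpa [← vecMul_sub, mul_comm] using l1_vecMul_le_of_sum_abs_le (v := u) (M := M - M') hK
  | succ t ih =>
    set v := u ᵥ* M ^ (t + 1) - u ᵥ* M' ^ (t + 1)
    have hsplit : u ᵥ* M ^ (t + 1 + 1) - u ᵥ* M' ^ (t + 1 + 1)
        = (u ᵥ* M ^ (t + 1)) ᵥ* (M - M') + v ᵥ* M' := by
      rw [pow_succ M, pow_succ M', ← vecMul_vecMul, ← vecMul_vecMul, vecMul_sub, sub_vecMul]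
      abel
    have hv : ∑ s, v s = 0 := by
      simp [v, Finset.sum_sub_distrib, sum_vecMul_pow_of_mulVec_one hM1,
        sum_vecMul_pow_of_mulVec_one hM'1]
    calc _ ≤ l1 ((u ᵥ* M ^ (t + 1)) ᵥ* (M - M')) + l1 (v ᵥ* M') :=
          (congrArg l1 hsplit).trans_le (l1_add_le _ _)
      _ ≤ γ ^ (t + 1) * l1 u * K + γ * ((t + 1) * γ ^ t * K * l1 u) :=
          add_le_add ((l1_vecMul_le_of_sum_abs_le hK).trans
              (mul_le_mul_of_nonneg_right (hM.l1_vecMul_pow_le hM1 hγ hu _) hK0))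
            ((hM'.l1_vecMul_le hv).trans (mul_le_mul_of_nonneg_left ih hγ))
      _ = _ := by push_cast; ring

end IsContraction

end Contraction

lemma hasSum_succ_mul_geometric {γ : ℝ} (hγ0 : 0 ≤ γ) (hγ1 : γ < 1) :
    HasSum (fun t : ℕ => ((t : ℝ) + 1) * γ ^ t) ((1 - γ)⁻¹ ^ 2) := by
  have hγ : ‖γ‖ < 1 := by rwa [Real.norm_of_nonneg hγ0]
  have h := (hasSum_coe_mul_geometric_of_norm_lt_one hγ).add (hasSum_geometric_of_lt_one hγ0 hγ1)
  rw [show γ / (1 - γ) ^ 2 + (1 - γ)⁻¹ = (1 - γ)⁻¹ ^ 2 by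
    field_simp [(sub_pos.2 hγ1).ne']; ring] at h
  simpa only [add_mul, one_mul] using h

lemma pow_succ_le_succ_mul_pow {γ : ℝ} (hγ0 : 0 ≤ γ) (hγ1 : γ ≤ 1) (t : ℕ) :
    γ ^ (t + 1) ≤ (t + 1) * γ ^ t := by
  rw [pow_succ']
  gcongr
  linarith [(t.cast_nonneg : (0 : ℝ) ≤ t)]

section RelativeValue

variable {S : Type} [Fintype S]

structure IsMixingChain (M : Matrix S S ℝ) (γ : ℝ) (p : S → ℝ) : Prop where
  contraction : IsContraction M γ
  mulVec_one : M *ᵥ 1 = 1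
  isDist : IsDist p
  stationary : p ᵥ* M = p

def relValue [DecidableEq S] (M : Matrix S S ℝ) (p R e : S → ℝ) : ℝ :=
  ∑' t : ℕ, ((e - p) ᵥ* M ^ (t + 1)) ⬝ᵥ R - p ⬝ᵥ R

variable {M M' : Matrix S S ℝ} {γ K ρ : ℝ} {p p' R R' e : S → ℝ}

lemma IsMixingChain.summable_vecMul_pow_dotProduct [DecidableEq S] (hM : IsMixingChain M γ p)
    (hγ0 : 0 ≤ γ) (hγ1 : γ < 1) (he : IsDist e) (R : S → ℝ) :
    Summable fun t : ℕ => ((e - p) ᵥ* M ^ (t + 1)) ⬝ᵥ R := by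
  refine .of_norm_bounded ((summable_geometric_of_lt_one hγ0 hγ1).mul_right (l1 (e - p) * ‖R‖))
    fun t => ?_
  calc ‖((e - p) ᵥ* M ^ (t + 1)) ⬝ᵥ R‖ ≤ l1 ((e - p) ᵥ* M ^ (t + 1)) * ‖R‖ :=
        abs_dotProduct_le fun s => (Real.norm_eq_abs (R s)).symm.trans_le (norm_le_pi_norm R s)
    _ ≤ γ ^ (t + 1) * l1 (e - p) * ‖R‖ := by
        gcongr
        exact hM.contraction.l1_vecMul_pow_le hM.mulVec_one hγ0 (he.sum_sub_eq_zero hM.isDist) _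
    _ ≤ γ ^ t * (l1 (e - p) * ‖R‖) := by
        rw [mul_assoc]
        exact mul_le_mul_of_nonneg_right (pow_le_pow_of_le_one hγ0 hγ1.le t.le_succ)
          (mul_nonneg (l1_nonneg _) (norm_nonneg R))

lemma IsMixingChain.abs_dotProduct_sub_le (hM : IsMixingChain M γ p)
    (hM' : IsMixingChain M' γ p') (hγ1 : γ < 1) (hK : ∀ s, ∑ s', |M s s' - M' s s'| ≤ K)
    (hρ : 0 ≤ ρ) (hR' : ∀ s, |R' s| ≤ ρ) (hRR' : ∀ s, |R s - R' s| ≤ K * ρ) :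
    |p ⬝ᵥ R - p' ⬝ᵥ R'| ≤ K * ρ * (1 + (1 - γ)⁻¹) := by
  have hpp' := hM'.contraction.l1_sub_le_of_stationary hγ1 hK hM.isDist hM'.isDist
    hM.stationary hM'.stationary
  calc |p ⬝ᵥ R - p' ⬝ᵥ R'| = |p ⬝ᵥ (R - R') + (p - p') ⬝ᵥ R'| := by
        rw [dotProduct_sub, sub_dotProduct]
        ring_nf
    _ ≤ l1 p * (K * ρ) + l1 (p - p') * ρ :=
        (abs_add_le _ _).trans (add_le_add (abs_dotProduct_le hRR') (abs_dotProduct_le hR'))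
    _ ≤ 1 * (K * ρ) + K / (1 - γ) * ρ := by
        rw [hM.isDist.l1_eq_one]
        gcongr
    _ = K * ρ * (1 + (1 - γ)⁻¹) := by ring

lemma IsMixingChain.abs_vecMul_pow_dotProduct_sub_le [DecidableEq S] (hM : IsMixingChain M γ p)
    (hM' : IsMixingChain M' γ p') (hγ0 : 0 ≤ γ) (hγ1 : γ < 1) (hK0 : 0 ≤ K)
    (hK : ∀ s, ∑ s', |M s s' - M' s s'| ≤ K) (he : IsDist e) (hρ : 0 ≤ ρ)
    (hR' : ∀ s, |R' s| ≤ ρ) (hRR' : ∀ s, |R s - R' s| ≤ K * ρ) (t : ℕ) :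
    |((e - p) ᵥ* M ^ (t + 1)) ⬝ᵥ R - ((e - p') ᵥ* M' ^ (t + 1)) ⬝ᵥ R'|
      ≤ K * ρ * (4 + (1 - γ)⁻¹) * ((t + 1) * γ ^ t) := by
  set u := e - p
  have hu : ∑ s, u s = 0 := he.sum_sub_eq_zero hM.isDist
  have hu2 : l1 u ≤ 2 := he.l1_sub_le_two hM.isDist
  have hpp' := hM'.contraction.l1_sub_le_of_stationary hγ1 hK hM.isDist hM'.isDist
    hM.stationary hM'.stationary
  have hsplit : (u ᵥ* M ^ (t + 1)) ⬝ᵥ R - ((e - p') ᵥ* M' ^ (t + 1)) ⬝ᵥ R'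
      = (u ᵥ* M ^ (t + 1)) ⬝ᵥ (R - R') + (u ᵥ* M ^ (t + 1) - u ᵥ* M' ^ (t + 1)) ⬝ᵥ R'
        - ((p - p') ᵥ* M' ^ (t + 1)) ⬝ᵥ R' := by
    rw [← sub_add_sub_cancel e p p', add_vecMul, add_dotProduct, dotProduct_sub,
      sub_dotProduct]
    ring
  have h1 : |(u ᵥ* M ^ (t + 1)) ⬝ᵥ (R - R')| ≤ γ ^ (t + 1) * 2 * (K * ρ) := by
    refine (abs_dotProduct_le hRR').trans (mul_le_mul_of_nonneg_right ?_ (by positivity))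
    refine (hM.contraction.l1_vecMul_pow_le hM.mulVec_one hγ0 hu _).trans ?_
    gcongr
  have h2 : |(u ᵥ* M ^ (t + 1) - u ᵥ* M' ^ (t + 1)) ⬝ᵥ R'| ≤ (t + 1) * γ ^ t * K * 2 * ρ := by
    refine (abs_dotProduct_le hR').trans (mul_le_mul_of_nonneg_right ?_ hρ)
    refine (hM.contraction.l1_vecMul_pow_sub_le hM'.contraction hM.mulVec_one hM'.mulVec_one
      hγ0 hK0 hK hu t).trans ?_
    gcongr
  have h3 : |((p - p') ᵥ* M' ^ (t + 1)) ⬝ᵥ R'| ≤ γ ^ (t + 1) * (K / (1 - γ)) * ρ := by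
    refine (abs_dotProduct_le hR').trans (mul_le_mul_of_nonneg_right ?_ hρ)
    refine (hM'.contraction.l1_vecMul_pow_le hM'.mulVec_one hγ0
      (hM.isDist.sum_sub_eq_zero hM'.isDist) _).trans ?_
    gcongr
  have hγt := pow_succ_le_succ_mul_pow hγ0 hγ1.le t
  have hinv : 0 ≤ (1 - γ)⁻¹ := inv_nonneg.2 (sub_pos.2 hγ1).le
  rw [hsplit]
  calc _ ≤ γ ^ (t + 1) * 2 * (K * ρ) + (t + 1) * γ ^ t * K * 2 * ρ
        + γ ^ (t + 1) * (K / (1 - γ)) * ρ :=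
        (abs_sub _ _).trans (add_le_add ((abs_add_le _ _).trans (add_le_add h1 h2)) h3)
    _ = 2 * (K * ρ) * γ ^ (t + 1) + 2 * (K * ρ) * ((t + 1) * γ ^ t)
        + K * ρ * (1 - γ)⁻¹ * γ ^ (t + 1) := by ring
    _ ≤ 2 * (K * ρ) * ((t + 1) * γ ^ t) + 2 * (K * ρ) * ((t + 1) * γ ^ t)
        + K * ρ * (1 - γ)⁻¹ * ((t + 1) * γ ^ t) := by gcongr
    _ = K * ρ * (4 + (1 - γ)⁻¹) * ((t + 1) * γ ^ t) := by ring

theorem IsMixingChain.abs_relValue_sub_le [DecidableEq S] (hM : IsMixingChain M γ p)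
    (hM' : IsMixingChain M' γ p') (hγ0 : 0 ≤ γ) (hγ1 : γ < 1) (hK0 : 0 ≤ K)
    (hK : ∀ s, ∑ s', |M s s' - M' s s'| ≤ K) (he : IsDist e) (hρ : 0 ≤ ρ)
    (hR' : ∀ s, |R' s| ≤ ρ) (hRR' : ∀ s, |R s - R' s| ≤ K * ρ) :
    |relValue M p R e - relValue M' p' R' e|
      ≤ K * ρ * (1 + (1 - γ)⁻¹ + (4 + (1 - γ)⁻¹) * (1 - γ)⁻¹ ^ 2) := by
  have hseries : |∑' t : ℕ, ((e - p) ᵥ* M ^ (t + 1)) ⬝ᵥ R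
      - ∑' t : ℕ, ((e - p') ᵥ* M' ^ (t + 1)) ⬝ᵥ R'|
      ≤ K * ρ * (4 + (1 - γ)⁻¹) * (1 - γ)⁻¹ ^ 2 := by
    rw [← (hM.summable_vecMul_pow_dotProduct hγ0 hγ1 he R).tsum_sub
      (hM'.summable_vecMul_pow_dotProduct hγ0 hγ1 he R')]
    refine (Real.norm_eq_abs _).symm.trans_le
      (tsum_of_norm_bounded ((hasSum_succ_mul_geometric hγ0 hγ1).mul_left _) fun t => ?_)
    exact (Real.norm_eq_abs _).trans_le
      (hM.abs_vecMul_pow_dotProduct_sub_le hM' hγ0 hγ1 hK0 hK he hρ hR' hRR' t)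
  have hvalue := hM.abs_dotProduct_sub_le hM' hγ1 hK hρ hR' hRR'
  calc |relValue M p R e - relValue M' p' R' e|
      = |(∑' t : ℕ, ((e - p) ᵥ* M ^ (t + 1)) ⬝ᵥ R - ∑' t : ℕ, ((e - p') ᵥ* M' ^ (t + 1)) ⬝ᵥ R')
          - (p ⬝ᵥ R - p' ⬝ᵥ R')| := by
        unfold relValue
        ring_nf
    _ ≤ K * ρ * (4 + (1 - γ)⁻¹) * (1 - γ)⁻¹ ^ 2 + K * ρ * (1 + (1 - γ)⁻¹) :=
        (abs_sub _ _).trans (add_le_add hseries hvalue)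
    _ = K * ρ * (1 + (1 - γ)⁻¹ + (4 + (1 - γ)⁻¹) * (1 - γ)⁻¹ ^ 2) := by ring

end RelativeValue

lemma abs_prod_sub_prod_le {ι : Type*} [DecidableEq ι] (t : Finset ι) {f g : ι → ℝ} {d : ℝ}
    (hf : ∀ i, |f i| ≤ 1) (hg : ∀ i, |g i| ≤ 1) (hfg : ∀ i, |f i - g i| ≤ d) :
    |∏ i ∈ t, f i - ∏ i ∈ t, g i| ≤ t.card * d := by
  induction t using Finset.induction with
  | empty => simp
  | insert j t hj ih =>
    have hd : 0 ≤ d := (abs_nonneg _).trans (hfg j)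
    have hgt : |∏ i ∈ t, g i| ≤ 1 := by
      rw [Finset.abs_prod]
      exact Finset.prod_le_one (fun i _ => abs_nonneg _) fun i _ => hg i
    rw [Finset.prod_insert hj, Finset.prod_insert hj, Finset.card_insert_of_notMem hj,
      Nat.cast_succ]
    calc |f j * ∏ i ∈ t, f i - g j * ∏ i ∈ t, g i|
        = |f j * (∏ i ∈ t, f i - ∏ i ∈ t, g i) + (f j - g j) * ∏ i ∈ t, g i| := by ring_nf
      _ ≤ |f j| * |∏ i ∈ t, f i - ∏ i ∈ t, g i| + |f j - g j| * |∏ i ∈ t, g i| := by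
        rw [← abs_mul, ← abs_mul]
        exact abs_add_le _ _
      _ ≤ 1 * (t.card * d) + d * 1 := by
        gcongr
        exacts [hf j, hfg j]
      _ = (t.card + 1) * d := by ring

section PolicyDistance

variable {n : ℕ} {S : Type} {A : Fin n → Type} {π π' : ∀ i : Fin n, S → A i → ℝ}

lemma polDist_nonneg (π π' : ∀ i : Fin n, S → A i → ℝ) : 0 ≤ polDist π π' :=
  Real.iSup_nonneg fun _ => Real.iSup_nonneg fun _ => Real.iSup_nonneg fun _ => abs_nonneg _

lemma abs_sub_le_polDist [Finite S] [∀ i, Finite (A i)] (i : Fin n) (s : S) (a : A i) :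
    |π i s a - π' i s a| ≤ polDist π π' :=
  calc |π i s a - π' i s a| ≤ ⨆ a, |π i s a - π' i s a| :=
        le_ciSup (f := fun a => |π i s a - π' i s a|) (Set.finite_range _).bddAbove a
    _ ≤ ⨆ s, ⨆ a, |π i s a - π' i s a| :=
        le_ciSup (f := fun s => ⨆ a, |π i s a - π' i s a|) (Set.finite_range _).bddAbove s
    _ ≤ polDist π π' :=
        le_ciSup (f := fun i => ⨆ s, ⨆ a, |π i s a - π' i s a|) (Set.finite_range _).bddAbove i

end PolicyDistance

section Game

variable {n : ℕ} {S : Type} {A : Fin n → Type} [∀ i, Fintype (A i)]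
  {T : S → (∀ i, A i) → S → ℝ} {r : S → (∀ i, A i) → ℝ} {rmax : ℝ}
  {π π' : ∀ i : Fin n, S → A i → ℝ}

lemma IsPolicyProfile.le_one (hπ : IsPolicyProfile π) (i : Fin n) (s : S) (a : A i) :
    π i s a ≤ 1 :=
  hπ.2 i s ▸ Finset.single_le_sum (fun b _ => hπ.1 i s b) (Finset.mem_univ a)

lemma IsPolicyProfile.sum_prod_eq_one (hπ : IsPolicyProfile π) (s : S) :
    ∑ a : ∀ i, A i, ∏ i, π i s (a i) = 1 := by
  rw [← Fintype.piFinset_univ, ← Finset.prod_univ_sum]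
  simp [hπ.2 _ s]

lemma sum_abs_prod_sub_prod_le [Finite S] (hπ : IsPolicyProfile π) (hπ' : IsPolicyProfile π')
    (s : S) :
    ∑ a : ∀ i, A i, |∏ i, π i s (a i) - ∏ i, π' i s (a i)|
      ≤ Fintype.card (∀ i, A i) * n * polDist π π' := by
  have hle : ∀ {ρ : ∀ i : Fin n, S → A i → ℝ}, IsPolicyProfile ρ → ∀ i a, |ρ i s a| ≤ 1 :=
    fun hρ i a => abs_le.2 ⟨by linarith [hρ.1 i s a], hρ.le_one i s a⟩
  calc _ ≤ ∑ _a : ∀ i, A i, (n : ℝ) * polDist π π' := Finset.sum_le_sum fun a _ => by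
        simpa using abs_prod_sub_prod_le Finset.univ (fun i => hle hπ i (a i))
          (fun i => hle hπ' i (a i)) fun i => abs_sub_le_polDist i s (a i)
    _ = _ := by simp [mul_assoc]

lemma Pmat_mulVec_one [Fintype S] (hT : IsTransition T) (hπ : IsPolicyProfile π) :
    Pmat T π *ᵥ 1 = 1 := by
  funext s
  simp only [mulVec, dotProduct, Pmat, Pi.one_apply, mul_one]
  rw [Finset.sum_comm]
  simp [← Finset.sum_mul, hT.2, hπ.sum_prod_eq_one s]

lemma sum_abs_Pmat_sub_le [Fintype S] (hT : IsTransition T) (hπ : IsPolicyProfile π)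
    (hπ' : IsPolicyProfile π') (s : S) :
    ∑ s', |Pmat T π s s' - Pmat T π' s s'| ≤ Fintype.card (∀ i, A i) * n * polDist π π' :=
  calc ∑ s', |Pmat T π s s' - Pmat T π' s s'|
      ≤ ∑ s', ∑ a : ∀ i, A i, T s a s' * |∏ i, π i s (a i) - ∏ i, π' i s (a i)| := by
        refine Finset.sum_le_sum fun s' _ => ?_
        simp only [Pmat, ← Finset.sum_sub_distrib, ← mul_sub]
        refine (Finset.abs_sum_le_sum_abs _ _).trans_eq (Finset.sum_congr rfl fun a _ => ?_)
        rw [abs_mul, abs_of_nonneg (hT.1 s a s')]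
    _ = ∑ a : ∀ i, A i, |∏ i, π i s (a i) - ∏ i, π' i s (a i)| := by
        rw [Finset.sum_comm]
        simp [← Finset.sum_mul, hT.2]
    _ ≤ _ := sum_abs_prod_sub_prod_le hπ hπ' s

lemma abs_Rvec_le (hr : ∀ s a, |r s a| ≤ rmax) (hπ : IsPolicyProfile π) (s : S) :
    |Rvec r π s| ≤ rmax :=
  calc |Rvec r π s| ≤ ∑ a : ∀ i, A i, (∏ i, π i s (a i)) * rmax := by
        refine (Finset.abs_sum_le_sum_abs _ _).trans (Finset.sum_le_sum fun a _ => ?_)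
        rw [abs_mul, abs_of_nonneg (Finset.prod_nonneg fun i _ => hπ.1 i s (a i))]
        exact mul_le_mul_of_nonneg_left (hr s a) (Finset.prod_nonneg fun i _ => hπ.1 i s (a i))
    _ = rmax := by rw [← Finset.sum_mul, hπ.sum_prod_eq_one s, one_mul]

lemma abs_Rvec_sub_le [Finite S] (hrmax : 0 ≤ rmax) (hr : ∀ s a, |r s a| ≤ rmax)
    (hπ : IsPolicyProfile π) (hπ' : IsPolicyProfile π') (s : S) :
    |Rvec r π s - Rvec r π' s| ≤ Fintype.card (∀ i, A i) * n * polDist π π' * rmax :=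
  calc |Rvec r π s - Rvec r π' s|
      ≤ ∑ a : ∀ i, A i, |∏ i, π i s (a i) - ∏ i, π' i s (a i)| * rmax := by
        simp only [Rvec, ← Finset.sum_sub_distrib, ← sub_mul]
        refine (Finset.abs_sum_le_sum_abs _ _).trans (Finset.sum_le_sum fun a _ => ?_)
        rw [abs_mul]
        exact mul_le_mul_of_nonneg_left (hr s a) (abs_nonneg _)
    _ ≤ _ := by
        rw [← Finset.sum_mul]
        exact mul_le_mul_of_nonneg_right (sum_abs_prod_sub_prod_le hπ hπ' s) hrmax

lemma adv_eq_add_relValue [Fintype S] [DecidableEq S] (p : S → ℝ) (s : S) (a : ∀ i, A i) :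
    adv T r π p s a = r s a + relValue (Pmat T π) p (Rvec r π) (Pi.single s 1) := by
  rw [adv, relValue, Vval, add_sub_assoc', sub_add_eq_add_sub]
  rfl

end Game

/-- Lipschitz continuity of the advantage functions in the policy profile, with a constant
depending only on `n`, `S`, `A`, `r_max` and `τ`. -/
theorem adv_lipschitz
    (rmax τ : ℝ) (hrmax : 0 ≤ rmax) (hτ : 0 < τ) :
    ∃ β > (0 : ℝ),
      ∀ T : S → (∀ i, A i) → S → ℝ, IsTransition T → Mixing T τ →
      ∀ r : Fin n → S → (∀ i, A i) → ℝ, (∀ i s a, r i s a ∈ Set.Icc (0 : ℝ) rmax) →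
      ∀ π π' : ∀ i : Fin n, S → A i → ℝ, IsPolicyProfile π → IsPolicyProfile π' →
      ∀ p p' : S → ℝ, IsDist p → p ᵥ* Pmat T π = p →
        IsDist p' → p' ᵥ* Pmat T π' = p' →
      ∀ (i : Fin n) (s : S) (a : ∀ j, A j),
        |adv T (r i) π p s a - adv T (r i) π' p' s a| ≤ β * polDist π π' := by
  set γ := Real.exp (-(1 / τ))
  have hγ0 : 0 ≤ γ := (Real.exp_pos _).le
  have hγ1 : γ < 1 := Real.exp_lt_one_iff.2 (by simpa using hτ)
  set D := 1 + (1 - γ)⁻¹ + (4 + (1 - γ)⁻¹) * (1 - γ)⁻¹ ^ 2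
  have hD : 0 ≤ D := by
    have := inv_nonneg.2 (sub_pos.2 hγ1).le
    positivity
  refine ⟨Fintype.card (∀ i, A i) * n * rmax * D + 1, by positivity, ?_⟩
  intro T hT hmix r hr π π' hπ hπ' p p' hp hpπ hp' hpπ' i s a
  have hri : ∀ s a, |r i s a| ≤ rmax := fun s a =>
    abs_le.2 ⟨by linarith [(hr i s a).1], (hr i s a).2⟩
  have hd := polDist_nonneg π π'
  have hrel := IsMixingChain.abs_relValue_sub_le (R := Rvec (r i) π)
    ⟨hmix π hπ, Pmat_mulVec_one hT hπ, hp, hpπ⟩ ⟨hmix π' hπ', Pmat_mulVec_one hT hπ', hp', hpπ'⟩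
    hγ0 hγ1 (by positivity) (sum_abs_Pmat_sub_le hT hπ hπ') (isDist_single s) hrmax
    (abs_Rvec_le hri hπ') (abs_Rvec_sub_le hrmax hri hπ hπ')
  rw [adv_eq_add_relValue, adv_eq_add_relValue, add_sub_add_left_eq_sub]
  exact hrel.trans (by nlinarith)

end
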